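/- Let Ω ⊆ ℝ^ν be measurable and R > 0, and let D be the integral operator on L²(ℝ^ν) with kernel D(x,y) = χ_Ω(x) Q_{2R}(x − y) χ_Ω(y), where Q_ρ is the characteristic function of {z : |z| < ρ}. Then for every k ≥ 1, the kernel of D^k satisfies 0 ≤ D^k(x,y) ≤ Q_{2kR}(x − y) · (ω_y^{2kR}(Ω))^{k−1} · χ_Ω(y) for all x, y. -/

import Mathlib

/-!
`D(x, ·)` is bounded by `1` and supported in `Ω ∩ B(x, 2R)`. Integrating `D(x, z) D^k(z, y)`
over `z` therefore only sees `z ∈ Ω ∩ B(y, 2kR)`, which by induction gives the three properties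
of `D^{k+1}`: it vanishes unless `|x - y| < 2(k+1)R` and `y ∈ Ω`, and it is bounded by
`|Ω ∩ B̄(y, 2kR)|^k ≤ |Ω ∩ B̄(y, 2(k+1)R)|^k`.
-/

open MeasureTheory
open scoped NNReal ENNReal
noncomputable section

/-- The kernel `D(x,y) = χ_Ω(x) Q_{2R}(x-y) χ_Ω(y)`. -/
def Dker {ν : ℕ} (Ω : Set (EuclideanSpace ℝ (Fin ν))) (R : ℝ)
    (x y : EuclideanSpace ℝ (Fin ν)) : ℝ :=
  Ω.indicator (fun _ => (1 : ℝ)) x * {z : EuclideanSpace ℝ (Fin ν) | ‖z‖ < 2 * R}.indicator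
    (fun _ => (1 : ℝ)) (x - y) * Ω.indicator (fun _ => (1 : ℝ)) y

/-- `iterKernel D k` is the kernel of the `(k+1)`-st power of the integral operator
with kernel `D`: `iterKernel D 0 = D` and
`iterKernel D (k+1) (x,y) = ∫ D(x,z) iterKernel D k (z,y) dz`. -/
def iterKernel {ν : ℕ}
    (D : EuclideanSpace ℝ (Fin ν) → EuclideanSpace ℝ (Fin ν) → ℝ) :
    ℕ → EuclideanSpace ℝ (Fin ν) → EuclideanSpace ℝ (Fin ν) → ℝ
  | 0 => D
  | k + 1 => fun x y => ∫ z, D x z * iterKernel D k z y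

theorem integral_le_measureReal_mul_of_le_indicator {X : Type*} [MeasurableSpace X]
    {μ : Measure X} {S : Set X} (hS : MeasurableSet S) (hμS : μ S ≠ ∞) {f : X → ℝ} {c : ℝ}
    (hf₀ : ∀ z, 0 ≤ f z) (hf : ∀ z, f z ≤ S.indicator (fun _ => c) z) :
    ∫ z, f z ∂μ ≤ μ.real S * c :=
  calc ∫ z, f z ∂μ ≤ ∫ z, S.indicator (fun _ => c) z ∂μ :=
        integral_mono_of_nonneg (Filter.Eventually.of_forall hf₀)
          ((integrable_indicator_iff hS).2 (integrableOn_const hμS))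
          (Filter.Eventually.of_forall hf)
    _ = μ.real S * c := integral_indicator_const c hS

section IterKernel

variable {ν : ℕ} {D : EuclideanSpace ℝ (Fin ν) → EuclideanSpace ℝ (Fin ν) → ℝ}
  {Ω : Set (EuclideanSpace ℝ (Fin ν))}

theorem iterKernel_succ (n : ℕ) (x y : EuclideanSpace ℝ (Fin ν)) :
    iterKernel D (n + 1) x y = ∫ z, D x z * iterKernel D n z y :=
  rfl

theorem iterKernel_nonneg (hD : ∀ x y, 0 ≤ D x y) (n : ℕ) (x y : EuclideanSpace ℝ (Fin ν)) :
    0 ≤ iterKernel D n x y := by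
  induction n generalizing x with
  | zero => exact hD x y
  | succ n ih => exact integral_nonneg fun z => mul_nonneg (hD x z) (ih z)

theorem iterKernel_eq_zero_of_notMem (hD : ∀ x y, y ∉ Ω → D x y = 0) (n : ℕ)
    (x : EuclideanSpace ℝ (Fin ν)) {y : EuclideanSpace ℝ (Fin ν)} (hy : y ∉ Ω) :
    iterKernel D n x y = 0 := by
  induction n generalizing x with
  | zero => exact hD x y hy
  | succ n ih => simp [iterKernel_succ, ih]

theorem iterKernel_eq_zero_of_le_norm {a : ℝ} (hD : ∀ x y, a ≤ ‖x - y‖ → D x y = 0) (n : ℕ)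
    {x y : EuclideanSpace ℝ (Fin ν)} (hxy : ((n + 1 : ℕ) : ℝ) * a ≤ ‖x - y‖) :
    iterKernel D n x y = 0 := by
  induction n generalizing x with
  | zero => exact hD x y (by simpa using hxy)
  | succ n ih =>
    rw [iterKernel_succ]
    refine integral_eq_zero_of_ae (Filter.Eventually.of_forall fun z => ?_)
    by_cases hxz : a ≤ ‖x - z‖
    · simp [hD x z hxz]
    · have hzy : ((n + 1 : ℕ) : ℝ) * a ≤ ‖z - y‖ := by
        have := norm_sub_le_norm_sub_add_norm_sub x z y
        push_cast at hxy ⊢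
        linarith
      simp [ih hzy]

theorem iterKernel_le_measureReal_pow (hΩ : MeasurableSet Ω) {a : ℝ} (ha : 0 ≤ a)
    (hD₀ : ∀ x y, 0 ≤ D x y) (hD₁ : ∀ x y, D x y ≤ 1) (hDΩ : ∀ x y, y ∉ Ω → D x y = 0)
    (hDa : ∀ x y, a ≤ ‖x - y‖ → D x y = 0) (n : ℕ) (x y : EuclideanSpace ℝ (Fin ν)) :
    iterKernel D n x y ≤ volume.real (Ω ∩ Metric.closedBall y (((n + 1 : ℕ) : ℝ) * a)) ^ n := by
  induction n generalizing x with
  | zero => exact (hD₁ x y).trans_eq (pow_zero _).symm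
  | succ n ih =>
    set S := Ω ∩ Metric.closedBall y (((n + 1 : ℕ) : ℝ) * a)
    have hbound : ∀ z, D x z * iterKernel D n z y ≤ S.indicator (fun _ => volume.real S ^ n) z := by
      intro z
      by_cases hz : z ∈ S
      · rw [Set.indicator_of_mem hz]
        exact (mul_le_of_le_one_left (iterKernel_nonneg hD₀ n z y) (hD₁ x z)).trans (ih z)
      rw [Set.indicator_of_notMem hz]
      by_cases hzΩ : z ∈ Ω
      · have hzy : ((n + 1 : ℕ) : ℝ) * a ≤ ‖z - y‖ := by
          by_contra! h
          exact hz ⟨hzΩ, by rw [Metric.mem_closedBall, dist_eq_norm]; exact h.le⟩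
        simp [iterKernel_eq_zero_of_le_norm hDa n hzy]
      · simp [hDΩ x z hzΩ]
    have hmono : volume.real S ≤
        volume.real (Ω ∩ Metric.closedBall y (((n + 1 + 1 : ℕ) : ℝ) * a)) := by
      refine measureReal_mono (Set.inter_subset_inter_right _
        (Metric.closedBall_subset_closedBall ?_))
        (measure_inter_lt_top_of_right_ne_top measure_closedBall_lt_top.ne).ne
      gcongr
      simp
    calc iterKernel D (n + 1) x y
        ≤ volume.real S * volume.real S ^ n :=
          integral_le_measureReal_mul_of_le_indicator
            (hΩ.inter Metric.isClosed_closedBall.measurableSet)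
            (measure_inter_lt_top_of_right_ne_top measure_closedBall_lt_top.ne).ne
            (fun z => mul_nonneg (hD₀ x z) (iterKernel_nonneg hD₀ n z y)) hbound
      _ = volume.real S ^ (n + 1) := (pow_succ' _ _).symm
      _ ≤ _ := by gcongr

end IterKernel

section Dker

variable {ν : ℕ} (Ω : Set (EuclideanSpace ℝ (Fin ν))) (R : ℝ)

theorem Dker_nonneg (x y : EuclideanSpace ℝ (Fin ν)) : 0 ≤ Dker Ω R x y := by
  classical
  simp only [Dker, Set.indicator_apply]
  split_ifs <;> norm_num

theorem Dker_le_one (x y : EuclideanSpace ℝ (Fin ν)) : Dker Ω R x y ≤ 1 := by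
  classical
  simp only [Dker, Set.indicator_apply]
  split_ifs <;> norm_num

theorem Dker_eq_zero_of_notMem (x : EuclideanSpace ℝ (Fin ν)) {y : EuclideanSpace ℝ (Fin ν)}
    (hy : y ∉ Ω) : Dker Ω R x y = 0 := by
  simp [Dker, hy]

theorem Dker_eq_zero_of_le_norm {x y : EuclideanSpace ℝ (Fin ν)} (h : 2 * R ≤ ‖x - y‖) :
    Dker Ω R x y = 0 := by
  simp [Dker, h]

end Dker

theorem statement18_general (ν : ℕ) (Ω : Set (EuclideanSpace ℝ (Fin ν)))
    (hΩmeas : MeasurableSet Ω) (R : ℝ) (hR : 0 < R) (k : ℕ) (hk : 1 ≤ k) :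
    ∀ x y : EuclideanSpace ℝ (Fin ν),
      0 ≤ iterKernel (Dker Ω R) (k - 1) x y ∧
      iterKernel (Dker Ω R) (k - 1) x y ≤
        {z : EuclideanSpace ℝ (Fin ν) | ‖z‖ < 2 * k * R}.indicator (fun _ => (1 : ℝ)) (x - y) *
          (volume (Ω ∩ Metric.closedBall y (2 * k * R))).toReal ^ (k - 1) *
          Ω.indicator (fun _ => (1 : ℝ)) y := by
  obtain ⟨n, rfl⟩ : ∃ n, k = n + 1 := ⟨k - 1, by omega⟩
  intro x y
  rw [Nat.add_sub_cancel, show 2 * ((n + 1 : ℕ) : ℝ) * R = ((n + 1 : ℕ) : ℝ) * (2 * R) by ring]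
  refine ⟨iterKernel_nonneg (Dker_nonneg Ω R) n x y, ?_⟩
  by_cases hxy : ‖x - y‖ < ((n + 1 : ℕ) : ℝ) * (2 * R)
  · by_cases hy : y ∈ Ω
    · rw [Set.indicator_of_mem (by exact hxy), Set.indicator_of_mem hy, one_mul, mul_one]
      exact iterKernel_le_measureReal_pow hΩmeas (by positivity)
        (Dker_nonneg Ω R) (Dker_le_one Ω R) (Dker_eq_zero_of_notMem Ω R)
        (fun _ _ => Dker_eq_zero_of_le_norm Ω R) n x y
    · rw [iterKernel_eq_zero_of_notMem (Dker_eq_zero_of_notMem Ω R) n x hy,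
        Set.indicator_of_notMem hy, mul_zero]
  · rw [iterKernel_eq_zero_of_le_norm (fun _ _ => Dker_eq_zero_of_le_norm Ω R) n (not_lt.1 hxy),
      Set.indicator_of_notMem (by exact hxy), zero_mul, zero_mul]

/-- The kernel of `D^k` satisfies
`0 ≤ D^k(x,y) ≤ Q_{2kR}(x-y) (ω_y^{2kR}(Ω))^{k-1} χ_Ω(y)`. -/
theorem statement18 (ν : ℕ) (hν : 1 ≤ ν) (Ω : Set (EuclideanSpace ℝ (Fin ν)))
    (hΩmeas : MeasurableSet Ω) (R : ℝ) (hR : 0 < R) (k : ℕ) (hk : 1 ≤ k) :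
    ∀ x y : EuclideanSpace ℝ (Fin ν),
      0 ≤ iterKernel (Dker Ω R) (k - 1) x y ∧
      iterKernel (Dker Ω R) (k - 1) x y ≤
        {z : EuclideanSpace ℝ (Fin ν) | ‖z‖ < 2 * k * R}.indicator (fun _ => (1 : ℝ)) (x - y) *
          (volume (Ω ∩ Metric.closedBall y (2 * k * R))).toReal ^ (k - 1) *
          Ω.indicator (fun _ => (1 : ℝ)) y :=
  statement18_general ν Ω hΩmeas R hR k hk
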